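/- Let E be a finite-dimensional real inner product space, D ⊆ E a linear subspace, W := ♭(D) ⊆ E*, γ : E* → E* the orthogonal projection onto W with respect to ⟪·,·⟫_*, Γ(q,p) := (q, γ(p)), pr_D : E → D the orthogonal projection, and ω the canonical symplectic form on E × E*. For F, G : E × E* → ℝ differentiable, set {F,G}_can(x) := ω(X_F(x), X_G(x)), where X_F(x) is the unique element with ω(X_F(x),·) = DF(x). Define φ : E × W → E × D* by φ(q,w) := (q, w|_D) (restriction of the functional w to D), which is a linear bijection. For smooth f, g : E × D* → ℝ define {f,g}_{D*}(q,η) := {f∘ρ, g∘ρ}_can(q, η∘pr_D), where ρ : E × E* → E × D*, ρ(q,p) := (q, p|_D). Then for all smooth f, g : E × D* → ℝ and all m ∈ E × W: {f∘φ, g∘φ}_E(m) = {f,g}_{D*}(φ(m)), where {h,k}_E(m) := {h∘Γ, k∘Γ}_can(m) for smooth h, k : E × W → ℝ. That is, φ is an almost Poisson isomorphism from (E × W, {·,·}_E) to (E × D*, {·,·}_{D*}). -/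

import Mathlib

open InnerProductSpace

/-- The canonical symplectic form on `E × E*`: `ω((v,α),(w,β)) = β(v) − α(w)`. -/
def canOmega (E : Type*) [NormedAddCommGroup E] [NormedSpace ℝ E] :
    (E × (E →L[ℝ] ℝ)) → (E × (E →L[ℝ] ℝ)) → ℝ :=
  fun x y => y.2 x.1 - x.2 y.1

/-- The inner product `⟪·,·⟫_*` induced on the dual `E*` by the musical isomorphism:
`⟪α,β⟫_* = ⟪♯α, ♯β⟫`. -/
noncomputable def dualInner {E : Type*} [NormedAddCommGroup E] [InnerProductSpace ℝ E]
    [FiniteDimensional ℝ E] (α β : E →L[ℝ] ℝ) : ℝ :=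
  inner ℝ ((InnerProductSpace.toDual ℝ E).symm α) ((InnerProductSpace.toDual ℝ E).symm β)

/-- The restriction map `ρ : E × E* → E × D*`, `ρ(q,p) = (q, p|_D)`. -/
noncomputable def rhoMap (E : Type*) [NormedAddCommGroup E] [InnerProductSpace ℝ E]
    (D : Submodule ℝ E) : E × (E →L[ℝ] ℝ) → E × (↥D →L[ℝ] ℝ) :=
  fun x => (x.1, x.2.comp D.subtypeL)

/-- The map `φ : E × W → E × D*`, `φ(q,w) = (q, w|_D)`. -/
noncomputable def phiMap (E : Type*) [NormedAddCommGroup E] [InnerProductSpace ℝ E]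
    (D : Submodule ℝ E) (W : Submodule ℝ (E →L[ℝ] ℝ)) : E × ↥W → E × (↥D →L[ℝ] ℝ) :=
  fun m => (m.1, (m.2 : E →L[ℝ] ℝ).comp D.subtypeL)

/-
Both brackets are brackets of functions on `E × E*`, and they agree because the functions and
the points agree. Since `p - γ p` is `⟪·,·⟫_*`-orthogonal to `♭(D)`, it vanishes on `D`, so
`γ p` and `p` have the same restriction to `D`: hence `f ∘ φ ∘ Γ = f ∘ ρ`. And a covector
`♭d` with `d ∈ D` is recovered from its restriction to `D` by composing with `pr_D`, so the
point `(q, φ(m)₂ ∘ pr_D)` at which `{f,g}_{D*}` is evaluated is `m` itself. Restriction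
`♭(D) → D*` is bijective because `♭d` vanishes on `D` only if `⟪d,d⟫ = 0`, and every
`η ∈ D*` is the restriction of `♭(♯_D η)`.
-/

section Restriction

variable {E : Type*} [NormedAddCommGroup E] [InnerProductSpace ℝ E] (D : Submodule ℝ E)

lemma dualInner_toDual_right [FiniteDimensional ℝ E] (α : E →L[ℝ] ℝ) (d : E) :
    dualInner α (toDual ℝ E d) = α d := by
  rw [dualInner, LinearIsometryEquiv.symm_apply_apply, toDual_symm_apply]

lemma comp_subtypeL_eq_of_dualInner_sub_eq_zero [FiniteDimensional ℝ E] {α β : E →L[ℝ] ℝ}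
    (h : ∀ d ∈ D, dualInner (α - β) (toDual ℝ E d) = 0) :
    α.comp D.subtypeL = β.comp D.subtypeL := by
  ext ⟨d, hd⟩
  simpa [dualInner_toDual_right, sub_eq_zero] using h d hd

lemma eq_zero_of_toDual_comp_subtypeL_eq_zero [CompleteSpace E] {d : E} (hd : d ∈ D)
    (h : (toDual ℝ E d : E →L[ℝ] ℝ).comp D.subtypeL = 0) : d = 0 := by
  have hdd : inner ℝ d d = 0 := by
    simpa using congrArg (fun η : D →L[ℝ] ℝ => η ⟨d, hd⟩) h
  exact inner_self_eq_zero.mp hdd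

lemma toDual_comp_subtypeL_toDual_symm [CompleteSpace E] [CompleteSpace D] (η : D →L[ℝ] ℝ) :
    (toDual ℝ E ((toDual ℝ D).symm η : E) : E →L[ℝ] ℝ).comp D.subtypeL = η := by
  ext v
  rw [ContinuousLinearMap.comp_apply, toDual_apply_apply, Submodule.subtypeL_apply,
    ← Submodule.coe_inner, toDual_symm_apply]

lemma toDual_comp_subtypeL_comp_orthogonalProjectionOnto [CompleteSpace E]
    [D.HasOrthogonalProjection] {d : E} (hd : d ∈ D) :
    ((toDual ℝ E d : E →L[ℝ] ℝ).comp D.subtypeL).comp D.orthogonalProjectionOnto =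
      toDual ℝ E d := by
  ext v
  exact D.inner_orthogonalProjectionOnto_eq_of_mem_left ⟨d, hd⟩ v

end Restriction

section Phi

variable {E : Type*} [NormedAddCommGroup E] [InnerProductSpace ℝ E]
  (D : Submodule ℝ E) (W : Submodule ℝ (E →L[ℝ] ℝ))

lemma isLinearMap_phiMap : IsLinearMap ℝ (phiMap E D W) where
  map_add _ _ := by simp [phiMap, ContinuousLinearMap.add_comp]
  map_smul _ _ := by simp [phiMap, ContinuousLinearMap.smul_comp]

lemma phiMap_injective [CompleteSpace E] (hW : W ≤ D.map (toDual ℝ E).toLinearEquiv.toLinearMap) :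
    Function.Injective (phiMap E D W) := by
  rintro ⟨q₁, w₁⟩ ⟨q₂, w₂⟩ h
  obtain ⟨d, hd, hdw⟩ := hW (W.sub_mem w₁.2 w₂.2)
  have hrestr : (toDual ℝ E d : E →L[ℝ] ℝ).comp D.subtypeL = 0 := by
    change (toDual ℝ E d : E →L[ℝ] ℝ) = w₁ - w₂ at hdw
    rw [hdw, ContinuousLinearMap.sub_comp, sub_eq_zero]
    exact congrArg Prod.snd h
  have hw : (w₁ : E →L[ℝ] ℝ) - w₂ = 0 := by
    rw [← hdw, eq_zero_of_toDual_comp_subtypeL_eq_zero D hd hrestr]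
    simp
  exact Prod.ext (congrArg Prod.fst h :) (Subtype.ext (sub_eq_zero.mp hw))

lemma phiMap_surjective [CompleteSpace E] [CompleteSpace D]
    (hW : D.map (toDual ℝ E).toLinearEquiv.toLinearMap ≤ W) :
    Function.Surjective (phiMap E D W) := fun ⟨q, η⟩ =>
  ⟨(q, ⟨_, hW ⟨_, ((toDual ℝ D).symm η).2, rfl⟩⟩),
    Prod.ext rfl (toDual_comp_subtypeL_toDual_symm D η)⟩

end Phi

theorem phi_is_almost_poisson_isomorphism_eden_to_algebroid_general
    (E : Type*) [NormedAddCommGroup E] [InnerProductSpace ℝ E] [FiniteDimensional ℝ E]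
    (D : Submodule ℝ E)
    (W : Submodule ℝ (E →L[ℝ] ℝ))
    (hW : W = Submodule.map (InnerProductSpace.toDual ℝ E).toLinearEquiv.toLinearMap D)
    -- `γ` is the orthogonal projection of `E*` onto `W` w.r.t. the dual inner product:
    (γ : (E →L[ℝ] ℝ) → (E →L[ℝ] ℝ))
    (hγW : ∀ α, γ α ∈ W)
    (hγorth : ∀ α, ∀ w ∈ W, dualInner (α - γ α) w = 0)
    -- `X_F(x)` is the (unique) Hamiltonian vector of `F` at `x`:
    (XF : (E × (E →L[ℝ] ℝ) → ℝ) → E × (E →L[ℝ] ℝ) → E × (E →L[ℝ] ℝ)) :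
    (IsLinearMap ℝ (phiMap E D W) ∧ Function.Bijective (phiMap E D W)) ∧
    (∀ f g : E × (↥D →L[ℝ] ℝ) → ℝ, ContDiff ℝ (⊤ : ℕ∞) f → ContDiff ℝ (⊤ : ℕ∞) g →
      ∀ m : E × ↥W,
        -- the Eden bracket `{f∘φ, g∘φ}_E` at `m` ...
        canOmega E
          (XF (fun x => f (phiMap E D W (x.1, ⟨γ x.2, hγW x.2⟩))) (m.1, ↑m.2))
          (XF (fun x => g (phiMap E D W (x.1, ⟨γ x.2, hγW x.2⟩))) (m.1, ↑m.2)) =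
        -- ... equals the algebroid bracket `{f,g}_{D*}` at `φ(m)`:
        canOmega E
          (XF (fun x => f (rhoMap E D x))
            ((phiMap E D W m).1, ((phiMap E D W m).2).comp (D.orthogonalProjection)))
          (XF (fun x => g (rhoMap E D x))
            ((phiMap E D W m).1, ((phiMap E D W m).2).comp (D.orthogonalProjection)))) := by
  refine ⟨⟨isLinearMap_phiMap D W, phiMap_injective D W hW.le, phiMap_surjective D W hW.ge⟩,
    fun f g _ _ m => ?_⟩
  have hΓ : ∀ x, phiMap E D W (x.1, ⟨γ x.2, hγW x.2⟩) = rhoMap E D x := fun x =>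
    Prod.ext rfl (comp_subtypeL_eq_of_dualInner_sub_eq_zero D fun d hd =>
      hγorth x.2 _ (hW.ge ⟨d, hd, rfl⟩)).symm
  obtain ⟨d, hd, hdw⟩ := hW.le m.2.2
  have hpt : ((phiMap E D W m).2).comp D.orthogonalProjectionOnto = m.2 := by
    change ((m.2 : E →L[ℝ] ℝ).comp D.subtypeL).comp D.orthogonalProjectionOnto = m.2
    rw [← hdw]
    exact toDual_comp_subtypeL_comp_orthogonalProjectionOnto D hd
  simp only [hΓ, hpt]
  rfl

/-- The map `φ : E × W → E × D*`, `φ(q,w) := (q, w|_D)`, is a linear bijection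
and an almost Poisson isomorphism from `(E × W, {·,·}_E)` (Eden bracket) to
`(E × D*, {·,·}_{D*})` (almost Lie algebroid bracket): for all smooth `f, g : E × D* → ℝ` and
all `m ∈ E × W`, `{f∘φ, g∘φ}_E(m) = {f,g}_{D*}(φ(m))`. -/
theorem phi_is_almost_poisson_isomorphism_eden_to_algebroid
    (E : Type*) [NormedAddCommGroup E] [InnerProductSpace ℝ E] [FiniteDimensional ℝ E]
    (D : Submodule ℝ E)
    (W : Submodule ℝ (E →L[ℝ] ℝ))
    (hW : W = Submodule.map (InnerProductSpace.toDual ℝ E).toLinearEquiv.toLinearMap D)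
    -- `γ` is the orthogonal projection of `E*` onto `W` w.r.t. the dual inner product:
    (γ : (E →L[ℝ] ℝ) → (E →L[ℝ] ℝ))
    (hγW : ∀ α, γ α ∈ W)
    (hγorth : ∀ α, ∀ w ∈ W, dualInner (α - γ α) w = 0)
    -- `X_F(x)` is the (unique) Hamiltonian vector of `F` at `x`:
    (XF : (E × (E →L[ℝ] ℝ) → ℝ) → E × (E →L[ℝ] ℝ) → E × (E →L[ℝ] ℝ))
    (hXF : ∀ (F : E × (E →L[ℝ] ℝ) → ℝ) (x : E × (E →L[ℝ] ℝ)), DifferentiableAt ℝ F x →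
      ∀ u, canOmega E (XF F x) u = fderiv ℝ F x u) :
    (IsLinearMap ℝ (phiMap E D W) ∧ Function.Bijective (phiMap E D W)) ∧
    (∀ f g : E × (↥D →L[ℝ] ℝ) → ℝ, ContDiff ℝ (⊤ : ℕ∞) f → ContDiff ℝ (⊤ : ℕ∞) g →
      ∀ m : E × ↥W,
        -- the Eden bracket `{f∘φ, g∘φ}_E` at `m` ...
        canOmega E
          (XF (fun x => f (phiMap E D W (x.1, ⟨γ x.2, hγW x.2⟩))) (m.1, ↑m.2))
          (XF (fun x => g (phiMap E D W (x.1, ⟨γ x.2, hγW x.2⟩))) (m.1, ↑m.2)) =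
        -- ... equals the algebroid bracket `{f,g}_{D*}` at `φ(m)`:
        canOmega E
          (XF (fun x => f (rhoMap E D x))
            ((phiMap E D W m).1, ((phiMap E D W m).2).comp (D.orthogonalProjection)))
          (XF (fun x => g (rhoMap E D x))
            ((phiMap E D W m).1, ((phiMap E D W m).2).comp (D.orthogonalProjection)))) :=
  phi_is_almost_poisson_isomorphism_eden_to_algebroid_general E D W hW γ hγW hγorth XF
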